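/- arXiv:2303.01719 — 2 statements merged into one kernel-verified Lean document; each statement's English description precedes it below -/
import Mathlib

section
/- The group of linear isometries of the weighted poset block space decomposes as a semidirect product: GL_{w,(P,π)}(V) ≅ 𝒯 ⋊ 𝒜, where 𝒯 = ker Λ is the normal subgroup of isometries fixing each principal-ideal filtration (with block-diagonal parts preserving the weights W_i), and 𝒜 = Ψ(Aut(P,π)) ≅ Aut(P,π). -/
attribute [local instance] Classical.propDecidable

noncomputable section

variable {ι F : Type*}

section Defs
variable [Fintype ι] [PartialOrder ι] [Field F] [Fintype F] {k : ι → ℕ}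

/-- block support -/
def suppB (u : ∀ i, Fin (k i) → F) : Finset ι :=
  Finset.univ.filter fun i => u i ≠ 0

/-- order ideal generated by the block support -/
def idealOf (u : ∀ i, Fin (k i) → F) : Finset ι :=
  Finset.univ.filter fun i => ∃ j ∈ suppB u, i ≤ j

/-- maximal elements of the ideal generated by the support -/
def maxOf (u : ∀ i, Fin (k i) → F) : Finset ι :=
  (idealOf u).filter fun i => ∀ j ∈ idealOf u, i ≤ j → i = j

/-- maximal weight of a block -/
def Wblk (w : F → ℕ) (u : ∀ i, Fin (k i) → F) (i : ι) : ℕ :=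
  Finset.univ.sup fun j => w (u i j)

/-- maximal value of the weight -/
def Mw (w : F → ℕ) : ℕ := Finset.univ.sup w

/-- minimal value of the weight on nonzero elements -/
def mw (w : F → ℕ) : ℕ := sInf (w '' {a | a ≠ 0})

/-- the weighted poset block weight -/
def omegaW (w : F → ℕ) (u : ∀ i, Fin (k i) → F) : ℕ :=
  (∑ i ∈ maxOf u, Wblk w u i) + (idealOf u \ maxOf u).card * Mw w

/-- principal ideal generated by `i` -/
def pIdeal (i : ι) : Finset ι := Finset.univ.filter fun j => j ≤ i

end Defs


/-- Membership in the subgroup `𝒯`: `T` maps each `v_i ∈ V_i` to `u_i + γ_i` with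
`u_i ∈ V_i`, `γ_i ∈ V_{⟨i⟩*}` and `W_i(v_i) = W_i(u_i)`. -/
def InT [Fintype ι] [PartialOrder ι] [Field F] [Fintype F] {k : ι → ℕ}
    (w : F → ℕ) (T : (∀ i, Fin (k i) → F) →ₗ[F] (∀ i, Fin (k i) → F)) : Prop :=
  ∀ (i : ι) (v : ∀ i, Fin (k i) → F), suppB v ⊆ {i} →
    ∃ u γ : ∀ i, Fin (k i) → F, T v = u + γ ∧ suppB u ⊆ {i} ∧
      (∀ l ∈ suppB γ, l < i) ∧ Wblk w v i = Wblk w u i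

/-- The group of linear isometries, as a subgroup of the linear automorphism
group of `V`. -/
def glIso [Fintype ι] [PartialOrder ι] [Field F] [Fintype F] {k : ι → ℕ}
    (w : F → ℕ) : Subgroup ((∀ i, Fin (k i) → F) ≃ₗ[F] (∀ i, Fin (k i) → F)) where
  carrier := {T | ∀ u, omegaW w (T u) = omegaW w u}
  one_mem' := fun _ => rfl
  mul_mem' := by
    intro a b ha hb u
    have : (a * b) u = a (b u) := rfl
    rw [this, ha, hb]
  inv_mem' := by
    intro a ha u
    have h := ha (a⁻¹ u)
    have h2 : a (a⁻¹ u) = u := a.apply_symm_apply u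
    rw [h2] at h
    exact h.symm

/-!
A linear isometry `T` never raises `numBelow`: a vector on block `i` weighs at most
`(numBelow i + 1) * Mw w`, while a vector whose ideal contains `j` weighs at least
`mw w + numBelow j * Mw w`. Applied to `T` and `T⁻¹`, this shows that the image of a nonzero
vector on block `i` meets a block `j` with `numBelow j = numBelow i`, necessarily maximal in its
ideal. For a vector of minimal weight `mw w` the weight leaves no room for a second maximal block,
so its image is `u_j + γ` with `γ` supported below `j`. Two minimal atoms of the same block get the
same `j`, and blocks `l < i` get `j_l < j_i`: otherwise the image of their sum has two maximal
blocks and is heavier than the sum itself. By linearity the whole block `i` goes to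
`η_T i := j`, and `T ↦ η_T` is a homomorphism onto `Aut(P,π)`, split by `φ ↦ T_φ`, whose kernel is
`𝒯`.
-/

open Finset

namespace MonoidHom

variable {G H : Type*} [Group G] [Group H] {f : G →* H} {g : H →* G}

lemma ker_inf_range_eq_bot_of_leftInverse (h : Function.LeftInverse f g) :
    f.ker ⊓ g.range = ⊥ := by
  rw [eq_bot_iff]
  intro x hx
  obtain ⟨hx, y, rfl⟩ := Subgroup.mem_inf.1 hx
  rw [mem_ker, h y] at hx
  rw [hx, map_one]
  exact one_mem _

lemma ker_sup_range_eq_top_of_leftInverse (h : Function.LeftInverse f g) :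
    f.ker ⊔ g.range = ⊤ := by
  refine eq_top_iff.2 fun x _ => ?_
  rw [← inv_mul_cancel_right x (g (f x))]
  refine Subgroup.mul_mem_sup ?_ ⟨f x, rfl⟩
  rw [mem_ker, map_mul, map_inv, h, mul_inv_cancel]

end MonoidHom

lemma mem_pIdeal [Fintype ι] [PartialOrder ι] {i j : ι} : j ∈ pIdeal i ↔ j ≤ i := by
  simp [pIdeal]

def numBelow [Fintype ι] [PartialOrder ι] (i : ι) : ℕ := (univ.filter (· < i)).card

lemma numBelow_strictMono [Fintype ι] [PartialOrder ι] : StrictMono (numBelow : ι → ℕ) := by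
  intro i j hij
  refine card_lt_card ((ssubset_iff_of_subset fun l hl => ?_).2 ⟨i, by simpa using hij, by simp⟩)
  simp only [mem_filter, mem_univ, true_and] at hl ⊢
  exact hl.trans hij

lemma not_le_of_numBelow_le [Fintype ι] [PartialOrder ι] {i j : ι} (hne : i ≠ j)
    (h : numBelow j ≤ numBelow i) : ¬ i ≤ j :=
  fun hij => (numBelow_strictMono (lt_of_le_of_ne hij hne)).not_ge h

section BlockSupport

variable [Fintype ι] [Field F] {k : ι → ℕ} {u y y' : ∀ i, Fin (k i) → F} {i j j' l : ι}

lemma mem_suppB : i ∈ suppB u ↔ u i ≠ 0 := by simp [suppB]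

lemma suppB_add_subset (u v : ∀ i, Fin (k i) → F) : suppB (u + v) ⊆ suppB u ∪ suppB v := by
  intro i
  simp only [mem_union, mem_suppB, Pi.add_apply]
  contrapose!
  rintro ⟨hu, hv⟩
  simp [hu, hv]

lemma suppB_smul_subset (a : F) (u : ∀ i, Fin (k i) → F) : suppB (a • u) ⊆ suppB u := by
  intro i
  simp only [mem_suppB, Pi.smul_apply]
  contrapose!
  intro h
  simp [h]

lemma suppB_single_subset (i : ι) (x : Fin (k i) → F) :
    suppB (Pi.single i x : ∀ i, Fin (k i) → F) ⊆ {i} := by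
  intro l hl
  by_contra h
  exact mem_suppB.1 hl (by rw [Pi.single_eq_of_ne (by simpa using h)])

lemma exists_mem_suppB_of_mem_suppB_sum {α : Type*} {s : Finset α}
    {f : α → ∀ i, Fin (k i) → F} (hj : j ∈ suppB (∑ a ∈ s, f a)) :
    ∃ a ∈ s, j ∈ suppB (f a) := by
  by_contra! h
  simp only [mem_suppB, ne_eq, not_not] at h
  exact mem_suppB.1 hj (by rw [Finset.sum_apply]; exact sum_eq_zero h)

lemma eq_single_of_suppB_subset (h : suppB u ⊆ {i}) : u = Pi.single i (u i) := by
  funext l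
  by_cases hl : l = i
  · subst hl
    simp
  · rw [Pi.single_eq_of_ne hl]
    by_contra hu
    exact hl (mem_singleton.1 (h (mem_suppB.2 hu)))

lemma suppB_subset_of_forall_single {κ : Type*} [Fintype κ] [DecidableEq κ]
    {S : Finset ι} (L : (κ → F) →ₗ[F] ∀ i, Fin (k i) → F) {b : F} (hb : b ≠ 0)
    (h : ∀ t, suppB (L (Pi.single t b)) ⊆ S) (x : κ → F) : suppB (L x) ⊆ S := by
  have hx : x = ∑ t, (x t * b⁻¹) • Pi.single t b := by
    conv_lhs => rw [← univ_sum_single x]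
    refine sum_congr rfl fun t _ => ?_
    rw [← Pi.single_smul', smul_eq_mul, mul_assoc, inv_mul_cancel₀ hb, mul_one]
  intro l hl
  rw [hx, map_sum] at hl
  obtain ⟨t, -, ht⟩ := exists_mem_suppB_of_mem_suppB_sum hl
  rw [map_smul] at ht
  exact h t (suppB_smul_subset _ _ ht)

variable [PartialOrder ι]

lemma mem_idealOf : i ∈ idealOf u ↔ ∃ j ∈ suppB u, i ≤ j := by simp [idealOf]

lemma mem_maxOf : i ∈ maxOf u ↔ i ∈ idealOf u ∧ ∀ j ∈ idealOf u, i ≤ j → i = j := by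
  simp [maxOf]

lemma suppB_subset_idealOf (u : ∀ i, Fin (k i) → F) : suppB u ⊆ idealOf u :=
  fun i hi => mem_idealOf.2 ⟨i, hi, le_rfl⟩

lemma maxOf_subset_idealOf (u : ∀ i, Fin (k i) → F) : maxOf u ⊆ idealOf u := filter_subset _ _

lemma maxOf_subset_suppB (u : ∀ i, Fin (k i) → F) : maxOf u ⊆ suppB u := by
  intro m hm
  obtain ⟨hm, hmax⟩ := mem_maxOf.1 hm
  obtain ⟨j, hj, hmj⟩ := mem_idealOf.1 hm
  rwa [hmax j (suppB_subset_idealOf u hj) hmj]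

lemma exists_mem_maxOf_le (hl : l ∈ idealOf u) : ∃ m ∈ maxOf u, l ≤ m := by
  obtain ⟨m, hlm, hm, hmax⟩ := (idealOf u).exists_le_maximal hl
  exact ⟨m, mem_maxOf.2 ⟨hm, fun j hj hmj => le_antisymm hmj (hmax hj hmj)⟩, hlm⟩

lemma mem_maxOf_of_mem_suppB (hj : j ∈ suppB u) (h : ∀ s ∈ suppB u, j ≤ s → s ≤ j) :
    j ∈ maxOf u := by
  refine mem_maxOf.2 ⟨suppB_subset_idealOf u hj, fun l hl hjl => ?_⟩
  obtain ⟨s, hs, hls⟩ := mem_idealOf.1 hl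
  exact le_antisymm hjl (hls.trans (h s hs (hjl.trans hls)))

lemma mem_maxOf_of_forall_numBelow_le (hj : j ∈ suppB u)
    (h : ∀ s ∈ suppB u, numBelow s ≤ numBelow j) : j ∈ maxOf u :=
  mem_maxOf_of_mem_suppB hj fun s hs hjs =>
    (hjs.eq_or_lt.resolve_right fun hlt => (numBelow_strictMono hlt).not_ge (h s hs)).ge

lemma lt_of_mem_suppB_sub_single (hy : suppB y ⊆ pIdeal j)
    (hl : l ∈ suppB (y - Pi.single j (y j))) : l < j := by
  have hlj : l ≠ j := by
    rintro rfl
    simp [mem_suppB] at hl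
  rw [mem_suppB, Pi.sub_apply, Pi.single_eq_of_ne hlj, sub_zero] at hl
  exact lt_of_le_of_ne (mem_pIdeal.1 (hy (mem_suppB.2 hl))) hlj

-- `y = u_j + γ` with `0 ≠ u_j ∈ V_j` and `γ ∈ V_{⟨j⟩*}`.
def HasTop (y : ∀ i, Fin (k i) → F) (j : ι) : Prop := suppB y ⊆ pIdeal j ∧ y j ≠ 0

lemma HasTop.mem_suppB (h : HasTop y j) : j ∈ suppB y := _root_.mem_suppB.2 h.2

lemma HasTop.le (h : HasTop y j) (hl : l ∈ suppB y) : l ≤ j := mem_pIdeal.1 (h.1 hl)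

lemma HasTop.unique (h : HasTop y j) (h' : HasTop y j') : j = j' :=
  le_antisymm (h'.le h.mem_suppB) (h.le h'.mem_suppB)

lemma hasTop_single {x : Fin (k i) → F} (hx : x ≠ 0) : HasTop (Pi.single i x) i :=
  ⟨(suppB_single_subset i x).trans (by simp [mem_pIdeal]), by simpa⟩

lemma HasTop.idealOf_eq (h : HasTop y j) : idealOf y = pIdeal j := by
  ext l
  rw [mem_idealOf, mem_pIdeal]
  exact ⟨fun ⟨s, hs, hls⟩ => hls.trans (h.le hs), fun hlj => ⟨j, h.mem_suppB, hlj⟩⟩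

lemma HasTop.maxOf_eq (h : HasTop y j) : maxOf y = {j} := by
  ext m
  rw [mem_maxOf, h.idealOf_eq, mem_pIdeal, mem_singleton]
  constructor
  · exact fun ⟨hm, hmax⟩ => hmax j (mem_pIdeal.2 le_rfl) hm
  · rintro rfl
    exact ⟨le_rfl, fun l hl hjl => le_antisymm hjl (mem_pIdeal.1 hl)⟩

end BlockSupport

section Weights

variable {k : ι → ℕ} {w : F → ℕ} {u v : ∀ i, Fin (k i) → F} {i : ι}

lemma le_Wblk (u : ∀ i, Fin (k i) → F) (i : ι) (t : Fin (k i)) : w (u i t) ≤ Wblk w u i :=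
  Finset.le_sup (f := fun t => w (u i t)) (mem_univ t)

lemma Wblk_congr (h : u i = v i) : Wblk w u i = Wblk w v i := by
  rw [Wblk, Wblk, h]

lemma Wblk_le_Mw [Fintype F] (u : ∀ i, Fin (k i) → F) (i : ι) : Wblk w u i ≤ Mw w :=
  Finset.sup_le fun _ _ => Finset.le_sup (mem_univ _)

variable [Field F]

lemma mw_le {a : F} (ha : a ≠ 0) : mw w ≤ w a := Nat.sInf_le ⟨a, ha, rfl⟩

lemma exists_eq_mw : ∃ b : F, b ≠ 0 ∧ w b = mw w := by
  obtain ⟨b, hb, hwb⟩ := Nat.sInf_mem (⟨w 1, 1, one_ne_zero, rfl⟩ : (w '' {a | a ≠ 0}).Nonempty)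
  exact ⟨b, hb, hwb⟩

lemma one_le_mw (hw0 : ∀ a : F, w a = 0 ↔ a = 0) : 1 ≤ mw w := by
  obtain ⟨b, hb, hwb⟩ := exists_eq_mw (w := w)
  rw [← hwb, Nat.one_le_iff_ne_zero]
  exact fun h => hb ((hw0 b).1 h)

lemma mw_le_Wblk (h : u i ≠ 0) : mw w ≤ Wblk w u i := by
  obtain ⟨t, ht⟩ := Function.ne_iff.1 h
  exact (mw_le ht).trans (le_Wblk u i t)

lemma Wblk_eq_zero_iff (hw0 : ∀ a : F, w a = 0 ↔ a = 0) : Wblk w u i = 0 ↔ u i = 0 := by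
  refine ⟨fun h => funext fun t => (hw0 _).1 (Nat.le_zero.1 (h ▸ le_Wblk u i t)), fun h => ?_⟩
  simp [Wblk, h, (hw0 0).2 rfl]

lemma Wblk_single_single (hw0 : ∀ a : F, w a = 0 ↔ a = 0) (t : Fin (k i))
    (a : F) : Wblk w (Pi.single i (Pi.single t a) : ∀ i, Fin (k i) → F) i = w a := by
  refine le_antisymm (Finset.sup_le fun s _ => ?_) ?_
  · rcases eq_or_ne s t with rfl | hst
    · simp
    · simp [Pi.single_eq_of_ne hst, (hw0 0).2 rfl]
  · simpa using le_Wblk (w := w) (Pi.single i (Pi.single t a) : ∀ i, Fin (k i) → F) i t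

lemma exists_ne_zero_block (hk : ∀ i, 0 < k i) (i : ι) : ∃ x : Fin (k i) → F, x ≠ 0 :=
  ⟨fun _ => 1, fun h => one_ne_zero (congrFun h ⟨0, hk i⟩)⟩

end Weights

section WeightBounds

variable [Fintype ι] [PartialOrder ι] [Field F] [Fintype F] {k : ι → ℕ} {w : F → ℕ}
  {u y y' : ∀ i, Fin (k i) → F} {j j' l : ι}

lemma HasTop.omegaW_eq (h : HasTop y j) : omegaW w y = Wblk w y j + numBelow j * Mw w := by
  have hbelow : pIdeal j \ {j} = univ.filter (· < j) := by
    ext l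
    simp [mem_pIdeal, lt_iff_le_and_ne]
  rw [omegaW, h.maxOf_eq, sum_singleton, h.idealOf_eq, hbelow, numBelow]

lemma sum_Wblk_add_le_omegaW {D : Finset ι} (hD : D ⊆ maxOf u) (hj : j ∈ D) :
    ∑ m ∈ D, Wblk w u m + (maxOf u \ D).card * mw w + numBelow j * Mw w ≤ omegaW w u := by
  have hsum : ∑ m ∈ D, Wblk w u m + (maxOf u \ D).card * mw w ≤ ∑ m ∈ maxOf u, Wblk w u m := by
    rw [← sum_sdiff hD, add_comm, ← smul_eq_mul]
    gcongr
    exact card_nsmul_le_sum _ _ _ fun m hm =>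
      mw_le_Wblk (mem_suppB.1 (maxOf_subset_suppB u (mem_sdiff.1 hm).1))
  have hcard : numBelow j ≤ (idealOf u \ maxOf u).card := by
    have hjI := maxOf_subset_idealOf u (hD hj)
    refine card_le_card fun l hl => ?_
    have hlj : l < j := by simpa using hl
    obtain ⟨s, hs, hjs⟩ := mem_idealOf.1 hjI
    refine mem_sdiff.2 ⟨mem_idealOf.2 ⟨s, hs, hlj.le.trans hjs⟩, fun hlmax => hlj.ne ?_⟩
    exact (mem_maxOf.1 hlmax).2 j hjI hlj.le
  exact add_le_add hsum (Nat.mul_le_mul_right _ hcard)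

lemma mw_add_le_omegaW (hl : l ∈ idealOf u) : mw w + numBelow l * Mw w ≤ omegaW w u := by
  obtain ⟨m, hm, hlm⟩ := exists_mem_maxOf_le hl
  have hbound := sum_Wblk_add_le_omegaW (w := w) (singleton_subset_iff.2 hm) (mem_singleton_self m)
  rw [sum_singleton] at hbound
  have hW := mw_le_Wblk (w := w) (mem_suppB.1 (maxOf_subset_suppB u hm))
  have hnum := Nat.mul_le_mul_right (Mw w) (numBelow_strictMono.monotone hlm)
  omega

lemma Wblk_add_Wblk_add_le_omegaW_add (hy : HasTop y j) (hy' : HasTop y' j')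
    (hjj' : ¬ j ≤ j') (hj'j : ¬ j' ≤ j) :
    Wblk w y j + Wblk w y' j' + numBelow j * Mw w ≤ omegaW w (y + y') := by
  have hyj' : y j' = 0 := by_contra fun h => hj'j (hy.le (mem_suppB.2 h))
  have hy'j : y' j = 0 := by_contra fun h => hjj' (hy'.le (mem_suppB.2 h))
  have hsupp : ∀ s ∈ suppB (y + y'), s ≤ j ∨ s ≤ j' := fun s hs =>
    (mem_union.1 (suppB_add_subset y y' hs)).imp hy.le hy'.le
  have hj : j ∈ maxOf (y + y') := by
    refine mem_maxOf_of_mem_suppB (mem_suppB.2 (by simpa [hy'j] using hy.2)) fun s hs hjs => ?_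
    exact (hsupp s hs).resolve_right fun hsj' => hjj' (hjs.trans hsj')
  have hj' : j' ∈ maxOf (y + y') := by
    refine mem_maxOf_of_mem_suppB (mem_suppB.2 (by simpa [hyj'] using hy'.2)) fun s hs hjs => ?_
    exact (hsupp s hs).resolve_left fun hsj => hj'j (hjs.trans hsj)
  have hne : j ≠ j' := fun h => hjj' h.le
  have hbound := sum_Wblk_add_le_omegaW (w := w) (insert_subset hj (singleton_subset_iff.2 hj'))
    (mem_insert_self j {j'})
  have hWj : Wblk w (y + y') j = Wblk w y j := Wblk_congr (by simp [hy'j])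
  have hWj' : Wblk w (y + y') j' = Wblk w y' j' := Wblk_congr (by simp [hyj'])
  rw [sum_pair hne, hWj, hWj'] at hbound
  omega

end WeightBounds

section Isometry

variable [Fintype ι] [PartialOrder ι] [Field F] [Fintype F] {k : ι → ℕ} {w : F → ℕ}
  {T : (∀ i, Fin (k i) → F) ≃ₗ[F] ∀ i, Fin (k i) → F} {i j j' : ι}

lemma omegaW_apply_of_mem_glIso (hT : T ∈ glIso w) (u : ∀ i, Fin (k i) → F) :
    omegaW w (T u) = omegaW w u :=
  hT u

lemma symm_mem_glIso (hT : T ∈ glIso w) : T.symm ∈ glIso w := (glIso w).inv_mem hT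

lemma Wblk_add_Wblk_le_of_hasTop (hT : T ∈ glIso w) {u u' : ∀ i, Fin (k i) → F}
    (hu : HasTop (u + u') i) (hy : HasTop (T u) j) (hy' : HasTop (T u') j') (hjj' : ¬ j ≤ j')
    (hj'j : ¬ j' ≤ j) (hji : numBelow j = numBelow i) :
    Wblk w (T u) j + Wblk w (T u') j' ≤ Wblk w (u + u') i := by
  have hbound := Wblk_add_Wblk_add_le_omegaW_add (w := w) hy hy' hjj' hj'j
  rw [← map_add, omegaW_apply_of_mem_glIso hT, hu.omegaW_eq, hji] at hbound
  omega

variable (hw0 : ∀ a : F, w a = 0 ↔ a = 0) (hT : T ∈ glIso w)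
include hw0 hT

lemma numBelow_le_of_mem_suppB_apply_single {x : Fin (k i) → F}
    (hj : j ∈ suppB (T (Pi.single i x))) : numBelow j ≤ numBelow i := by
  have hx : x ≠ 0 := by
    rintro rfl
    simp [mem_suppB] at hj
  have hbound := mw_add_le_omegaW (w := w) (suppB_subset_idealOf _ hj)
  rw [omegaW_apply_of_mem_glIso hT, (hasTop_single hx).omegaW_eq] at hbound
  have hW := Wblk_le_Mw (w := w) (Pi.single i x) i
  have hmw := one_le_mw hw0
  have hlt : numBelow j * Mw w < (numBelow i + 1) * Mw w := by
    rw [add_one_mul]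
    omega
  exact Nat.lt_succ_iff.1 (Nat.lt_of_mul_lt_mul_right hlt)

lemma exists_numBelow_le_of_mem_suppB {v : ∀ i, Fin (k i) → F} (hj : j ∈ suppB (T v)) :
    ∃ i ∈ suppB v, numBelow j ≤ numBelow i := by
  rw [← univ_sum_single v, map_sum] at hj
  obtain ⟨i, -, hi⟩ := exists_mem_suppB_of_mem_suppB_sum hj
  refine ⟨i, mem_suppB.2 fun h => ?_, numBelow_le_of_mem_suppB_apply_single hw0 hT hi⟩
  simp [h, mem_suppB] at hi

lemma exists_mem_suppB_apply_single_numBelow_eq {x : Fin (k i) → F} (hx : x ≠ 0) :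
    ∃ j ∈ suppB (T (Pi.single i x)), numBelow j = numBelow i := by
  have hi : i ∈ suppB (T.symm (T (Pi.single i x))) := by
    rw [T.symm_apply_apply]
    exact (hasTop_single hx).mem_suppB
  obtain ⟨j, hj, hij⟩ := exists_numBelow_le_of_mem_suppB hw0 (symm_mem_glIso hT) hi
  exact ⟨j, hj, le_antisymm (numBelow_le_of_mem_suppB_apply_single hw0 hT hj) hij⟩

lemma numBelow_eq_of_hasTop {x : Fin (k i) → F} (hx : x ≠ 0)
    (h : HasTop (T (Pi.single i x)) j) : numBelow j = numBelow i := by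
  obtain ⟨l, hl, hli⟩ := exists_mem_suppB_apply_single_numBelow_eq hw0 hT hx
  exact le_antisymm (numBelow_le_of_mem_suppB_apply_single hw0 hT h.mem_suppB)
    (hli ▸ numBelow_strictMono.monotone (h.le hl))

lemma exists_hasTop_of_Wblk_eq_mw {x : Fin (k i) → F}
    (hx : Wblk w (Pi.single i x : ∀ i, Fin (k i) → F) i = mw w) :
    ∃ j, HasTop (T (Pi.single i x)) j := by
  have hmw := one_le_mw hw0
  have hx0 : x ≠ 0 := by
    rintro rfl
    rw [(Wblk_eq_zero_iff hw0).2 (by simp)] at hx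
    omega
  obtain ⟨j, hj, hji⟩ := exists_mem_suppB_apply_single_numBelow_eq hw0 hT hx0
  have hjmax : j ∈ maxOf (T (Pi.single i x)) := mem_maxOf_of_forall_numBelow_le hj fun s hs =>
    hji ▸ numBelow_le_of_mem_suppB_apply_single hw0 hT hs
  have hbound := sum_Wblk_add_le_omegaW (w := w) (singleton_subset_iff.2 hjmax)
    (mem_singleton_self j)
  rw [sum_singleton, omegaW_apply_of_mem_glIso hT, (hasTop_single hx0).omegaW_eq, hx, hji]
    at hbound
  have hWj := mw_le_Wblk (w := w) (mem_suppB.1 hj)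
  have hcard : (maxOf (T (Pi.single i x)) \ {j}).card * mw w = 0 := by omega
  have hmax : maxOf (T (Pi.single i x)) ⊆ {j} := sdiff_eq_empty_iff_subset.1
    (card_eq_zero.1 ((mul_eq_zero.1 hcard).resolve_right (by omega)))
  refine ⟨j, fun l hl => ?_, mem_suppB.1 hj⟩
  obtain ⟨m, hm, hlm⟩ := exists_mem_maxOf_le (suppB_subset_idealOf _ hl)
  exact mem_pIdeal.2 (mem_singleton.1 (hmax hm) ▸ hlm)


lemma hasTop_eq_of_single_single {b : F} (hb : w b = mw w) {t t' : Fin (k i)}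
    (hj : HasTop (T (Pi.single i (Pi.single t b))) j)
    (hj' : HasTop (T (Pi.single i (Pi.single t' b))) j') : j = j' := by
  have hmw := one_le_mw hw0
  have hb0 : b ≠ 0 := by
    rintro rfl
    rw [(hw0 0).2 rfl] at hb
    omega
  rcases eq_or_ne t t' with rfl | htt'
  · exact hj.unique hj'
  by_contra hne
  have hnum_j := numBelow_eq_of_hasTop hw0 hT (Pi.single_ne_zero_iff.2 hb0) hj
  have hnum_j' := numBelow_eq_of_hasTop hw0 hT (Pi.single_ne_zero_iff.2 hb0) hj'
  have hsum : HasTop (Pi.single i (Pi.single t b) + Pi.single i (Pi.single t' b) :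
      ∀ i, Fin (k i) → F) i := by
    rw [← Pi.single_add]
    refine hasTop_single fun h => hb0 ?_
    simpa [Pi.single_eq_of_ne htt'] using congrFun h t
  have hWsum : Wblk w (Pi.single i (Pi.single t b) + Pi.single i (Pi.single t' b) :
      ∀ i, Fin (k i) → F) i ≤ mw w := by
    rw [← Pi.single_add]
    refine Finset.sup_le fun s _ => ?_
    rcases eq_or_ne s t with rfl | hst
    · simp [Pi.single_eq_of_ne htt', hb]
    · rcases eq_or_ne s t' with rfl | hst'
      · simp [Pi.single_eq_of_ne hst, hb]
      · simp [Pi.single_eq_of_ne hst, Pi.single_eq_of_ne hst', (hw0 0).2 rfl]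
  have h := Wblk_add_Wblk_le_of_hasTop hT hsum hj hj'
    (not_le_of_numBelow_le hne (hnum_j'.trans hnum_j.symm).le)
    (not_le_of_numBelow_le (Ne.symm hne) (hnum_j.trans hnum_j'.symm).le) hnum_j
  have hWj := mw_le_Wblk (w := w) hj.2
  have hWj' := mw_le_Wblk (w := w) hj'.2
  omega

end Isometry

section BlockMaps

variable [Fintype ι] [PartialOrder ι] [Field F] {k : ι → ℕ} {w : F → ℕ}

def MapsBlockTo (w : F → ℕ) (T : (∀ i, Fin (k i) → F) → ∀ i, Fin (k i) → F) (i j : ι) : Prop :=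
  ∀ x : Fin (k i) → F, suppB (T (Pi.single i x)) ⊆ pIdeal j ∧
    Wblk w (T (Pi.single i x)) j = Wblk w (Pi.single i x : ∀ i, Fin (k i) → F) i

lemma inT_iff [Fintype F] {T : (∀ i, Fin (k i) → F) →ₗ[F] ∀ i, Fin (k i) → F} :
    InT w T ↔ ∀ i, MapsBlockTo w T i i := by
  refine ⟨fun hT i x => ?_, fun hT i v hv => ?_⟩
  · obtain ⟨u, γ, hTx, hu, hγ, hW⟩ := hT i (Pi.single i x) (suppB_single_subset i x)
    have hγi : γ i = 0 := by_contra fun h => lt_irrefl i (hγ i (mem_suppB.2 h))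
    refine ⟨fun l hl => ?_, ?_⟩
    · rw [hTx] at hl
      rcases mem_union.1 (suppB_add_subset u γ hl) with h | h
      · exact mem_pIdeal.2 (mem_singleton.1 (hu h)).le
      · exact mem_pIdeal.2 (hγ l h).le
    · rw [hW, hTx]
      exact Wblk_congr (by simp [hγi])
  · obtain ⟨x, rfl⟩ : ∃ x, v = Pi.single i x := ⟨v i, eq_single_of_suppB_subset hv⟩
    set y := T (Pi.single i x)
    refine ⟨Pi.single i (y i), y - Pi.single i (y i), (add_sub_cancel _ _).symm,
      suppB_single_subset _ _, fun l hl => ?_, ?_⟩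
    · exact lt_of_mem_suppB_sub_single (hT i x).1 hl
    · rw [← (hT i x).2]
      exact Wblk_congr (by simp [y])

lemma mapsBlockTo_id (i : ι) : MapsBlockTo (k := k) w id i i := fun x =>
  ⟨(suppB_single_subset i x).trans (singleton_subset_iff.2 (mem_pIdeal.2 le_rfl)), rfl⟩

variable {T : (∀ i, Fin (k i) → F) → ∀ i, Fin (k i) → F} {i j j' : ι}

lemma MapsBlockTo.eq_zero_of_apply_single_eq_zero (hw0 : ∀ a : F, w a = 0 ↔ a = 0)
    (h : MapsBlockTo w T i j) {x : Fin (k i) → F} (hx : T (Pi.single i x) j = 0) : x = 0 := by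
  have hW := (h x).2
  rwa [(Wblk_eq_zero_iff hw0).2 hx, eq_comm, Wblk_eq_zero_iff hw0, Pi.single_eq_same] at hW

lemma MapsBlockTo.hasTop (hw0 : ∀ a : F, w a = 0 ↔ a = 0) (h : MapsBlockTo w T i j)
    {x : Fin (k i) → F} (hx : x ≠ 0) : HasTop (T (Pi.single i x)) j :=
  ⟨(h x).1, fun h0 => hx (h.eq_zero_of_apply_single_eq_zero hw0 h0)⟩

lemma MapsBlockTo.unique (hk : ∀ i, 0 < k i) (hw0 : ∀ a : F, w a = 0 ↔ a = 0)
    (h : MapsBlockTo w T i j) (h' : MapsBlockTo w T i j') : j = j' := by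
  obtain ⟨x, hx⟩ := exists_ne_zero_block (F := F) hk i
  exact (h.hasTop hw0 hx).unique (h'.hasTop hw0 hx)

lemma MapsBlockTo.dim_le {T : (∀ i, Fin (k i) → F) →ₗ[F] ∀ i, Fin (k i) → F}
    (hw0 : ∀ a : F, w a = 0 ↔ a = 0) (h : MapsBlockTo w T i j) : k i ≤ k j := by
  let L := LinearMap.proj (R := F) (φ := fun i => Fin (k i) → F) j ∘ₗ T ∘ₗ
    LinearMap.single F (fun i => Fin (k i) → F) i
  have hL : Function.Injective L := by
    rw [← LinearMap.ker_eq_bot, LinearMap.ker_eq_bot']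
    exact fun x hx => h.eq_zero_of_apply_single_eq_zero hw0 hx
  simpa using LinearMap.finrank_le_finrank_of_injective hL

lemma exists_mem_suppB_le_of_mapsBlockTo (S : (∀ i, Fin (k i) → F) →ₗ[F] ∀ i, Fin (k i) → F)
    {f : ι → ι} (hS : ∀ m, MapsBlockTo w S m (f m)) {v : ∀ i, Fin (k i) → F} {l : ι}
    (hl : l ∈ suppB (S v)) : ∃ m ∈ suppB v, l ≤ f m := by
  rw [← univ_sum_single v, map_sum] at hl
  obtain ⟨m, -, hm⟩ := exists_mem_suppB_of_mem_suppB_sum hl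
  refine ⟨m, mem_suppB.2 fun h0 => ?_, mem_pIdeal.1 ((hS m (v m)).1 hm)⟩
  simp [h0, mem_suppB] at hm

lemma MapsBlockTo.comp (hT : MapsBlockTo w T i j)
    (S : (∀ i, Fin (k i) → F) →ₗ[F] ∀ i, Fin (k i) → F) {f : ι → ι} (hf : StrictMono f)
    (hS : ∀ m, MapsBlockTo w S m (f m)) : MapsBlockTo w (S ∘ T) i (f j) := by
  intro x
  set y := T (Pi.single i x)
  set γ := y - Pi.single j (y j)
  have hSγ : ∀ l ∈ suppB (S γ), l < f j := fun l hl => by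
    obtain ⟨m, hm, hlm⟩ := exists_mem_suppB_le_of_mapsBlockTo S hS hl
    exact hlm.trans_lt (hf (lt_of_mem_suppB_sub_single (hT x).1 hm))
  have hSy : S y = S (Pi.single j (y j)) + S γ := by
    rw [← map_add, add_sub_cancel]
  have hSγj : S γ (f j) = 0 := by_contra fun h => lt_irrefl _ (hSγ _ (mem_suppB.2 h))
  refine ⟨fun l hl => ?_, ?_⟩
  · change l ∈ suppB (S y) at hl
    rw [hSy] at hl
    rcases mem_union.1 (suppB_add_subset _ _ hl) with h | h
    · exact (hS j (y j)).1 h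
    · exact mem_pIdeal.2 (hSγ l h).le
  · change Wblk w (S y) (f j) = _
    rw [Wblk_congr (v := S (Pi.single j (y j))) (by rw [hSy, Pi.add_apply, hSγj, add_zero]),
      (hS j (y j)).2, Wblk_congr (v := y) (by simp), (hT x).2]

end BlockMaps

section IsometryBlocks

variable [Fintype ι] [PartialOrder ι] [Field F] [Fintype F] {k : ι → ℕ} {w : F → ℕ}
  {T : (∀ i, Fin (k i) → F) ≃ₗ[F] ∀ i, Fin (k i) → F} {i j : ι}
  (hw0 : ∀ a : F, w a = 0 ↔ a = 0) (hT : T ∈ glIso w)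
include hw0 hT

lemma mapsBlockTo_of_hasTop_single {b : F} (hb : b ≠ 0)
    (hj : ∀ t : Fin (k i), HasTop (T (Pi.single i (Pi.single t b))) j)
    (hji : numBelow j = numBelow i) : MapsBlockTo w T i j := by
  intro x
  have hsupp : suppB (T (Pi.single i x)) ⊆ pIdeal j :=
    suppB_subset_of_forall_single (T.toLinearMap ∘ₗ LinearMap.single F (fun i => Fin (k i) → F) i)
      hb (fun t => (hj t).1) x
  refine ⟨hsupp, ?_⟩
  rcases eq_or_ne x 0 with rfl | hx
  · simp [(Wblk_eq_zero_iff hw0).2]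
  obtain ⟨l, hl, hli⟩ := exists_mem_suppB_apply_single_numBelow_eq hw0 hT hx
  have hlj : l = j := (mem_pIdeal.1 (hsupp hl)).eq_of_not_lt fun hlt =>
    (numBelow_strictMono hlt).ne (hli.trans hji.symm)
  have htop : HasTop (T (Pi.single i x)) j := ⟨hsupp, mem_suppB.1 (hlj ▸ hl)⟩
  have h := omegaW_apply_of_mem_glIso hT (Pi.single i x)
  rw [htop.omegaW_eq, (hasTop_single hx).omegaW_eq, hji] at h
  omega

lemma exists_mapsBlockTo (hk : ∀ i, 0 < k i) (i : ι) : ∃ j, MapsBlockTo w T i j := by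
  obtain ⟨b, hb0, hb⟩ := exists_eq_mw (w := w)
  choose j hj using fun t : Fin (k i) =>
    exists_hasTop_of_Wblk_eq_mw hw0 hT ((Wblk_single_single hw0 t b).trans hb)
  let t₀ : Fin (k i) := ⟨0, hk i⟩
  refine ⟨j t₀, mapsBlockTo_of_hasTop_single hw0 hT hb0 (fun t => ?_) ?_⟩
  · exact hasTop_eq_of_single_single hw0 hT hb (hj t) (hj t₀) ▸ hj t
  · exact numBelow_eq_of_hasTop hw0 hT (Pi.single_ne_zero_iff.2 hb0) (hj t₀)

lemma MapsBlockTo.numBelow_eq (hk : ∀ i, 0 < k i) (h : MapsBlockTo w T i j) :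
    numBelow j = numBelow i := by
  obtain ⟨x, hx⟩ := exists_ne_zero_block (F := F) hk i
  exact numBelow_eq_of_hasTop hw0 hT hx (h.hasTop hw0 hx)

lemma strictMono_of_mapsBlockTo (hk : ∀ i, 0 < k i) {f : ι → ι}
    (hf : ∀ i, MapsBlockTo w T i (f i)) : StrictMono f := by
  intro l i hli
  have hnum : numBelow (f l) < numBelow (f i) := by
    rw [(hf l).numBelow_eq hw0 hT hk, (hf i).numBelow_eq hw0 hT hk]
    exact numBelow_strictMono hli
  by_contra hlt
  obtain ⟨x, hx⟩ := exists_ne_zero_block (F := F) hk l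
  obtain ⟨x', hx'⟩ := exists_ne_zero_block (F := F) hk i
  have hil : i ≠ l := hli.ne'
  have hne : f l ≠ f i := fun h => hnum.ne (congrArg numBelow h)
  have hsum : HasTop (Pi.single i x' + Pi.single l x : ∀ i, Fin (k i) → F) i := by
    refine ⟨fun m hm => ?_, by simpa [Pi.single_eq_of_ne hil] using hx'⟩
    rcases mem_union.1 (suppB_add_subset _ _ hm) with h | h
    · exact mem_pIdeal.2 (mem_singleton.1 (suppB_single_subset i x' h)).le
    · exact mem_pIdeal.2 ((mem_singleton.1 (suppB_single_subset l x h)).le.trans hli.le)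
  have h := Wblk_add_Wblk_le_of_hasTop hT hsum ((hf i).hasTop hw0 hx') ((hf l).hasTop hw0 hx)
    (not_le_of_numBelow_le hne.symm hnum.le) (fun hle => hlt (lt_of_le_of_ne hle hne))
    ((hf i).numBelow_eq hw0 hT hk)
  have hW : Wblk w (Pi.single i x' + Pi.single l x : ∀ i, Fin (k i) → F) i =
      Wblk w (Pi.single i x' : ∀ i, Fin (k i) → F) i :=
    Wblk_congr (by simp [Pi.single_eq_of_ne hil])
  rw [hW, ← (hf i x').2] at h
  have := mw_le_Wblk (w := w) ((hf l).hasTop hw0 hx).2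
  have := one_le_mw hw0
  omega

end IsometryBlocks

-- `Aut(P,π)`, with the labelling `π` given by the block dimensions `k`.
def blockAut [PartialOrder ι] (k : ι → ℕ) : Subgroup (Equiv.Perm ι) where
  carrier := {φ | (∀ a b, a ≤ b ↔ φ a ≤ φ b) ∧ ∀ i, k (φ i) = k i}
  mul_mem' := fun ⟨hφ, hφk⟩ ⟨hψ, hψk⟩ =>
    ⟨fun a b => (hψ a b).trans (hφ _ _), fun i => (hφk _).trans (hψk i)⟩
  one_mem' := ⟨fun _ _ => Iff.rfl, fun _ => rfl⟩
  inv_mem' := fun {φ} ⟨hφ, hφk⟩ =>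
    ⟨fun a b => by simpa using (hφ (φ⁻¹ a) (φ⁻¹ b)).symm,
      fun i => by simpa using (hφk (φ⁻¹ i)).symm⟩

lemma blockAut.symm_le_symm_iff [PartialOrder ι] {k : ι → ℕ} (φ : blockAut k) {a b : ι} :
    φ.1.symm a ≤ φ.1.symm b ↔ a ≤ b := by
  simpa using φ.2.1 (φ.1.symm a) (φ.1.symm b)

lemma blockAut.k_eq_k_symm [PartialOrder ι] {k : ι → ℕ} (φ : blockAut k) (i : ι) :
    k i = k (φ.1.symm i) := by
  simpa using φ.2.2 (φ.1.symm i)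

section Homomorphisms

variable [Fintype ι] [PartialOrder ι] [Field F] [Fintype F] {k : ι → ℕ} {w : F → ℕ}
  (hk : ∀ i, 0 < k i) (hw0 : ∀ a : F, w a = 0 ↔ a = 0)

def blockMap (T : glIso (k := k) w) (i : ι) : ι := (exists_mapsBlockTo hw0 T.2 hk i).choose

lemma mapsBlockTo_blockMap (T : glIso (k := k) w) (i : ι) :
    MapsBlockTo w T.val i (blockMap hk hw0 T i) :=
  (exists_mapsBlockTo hw0 T.2 hk i).choose_spec

lemma blockMap_eq (T : glIso (k := k) w) {i j : ι} (h : MapsBlockTo w T.val i j) :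
    blockMap hk hw0 T i = j :=
  (mapsBlockTo_blockMap hk hw0 T i).unique hk hw0 h

lemma blockMap_strictMono (T : glIso (k := k) w) : StrictMono (blockMap hk hw0 T) :=
  strictMono_of_mapsBlockTo hw0 T.2 hk (mapsBlockTo_blockMap hk hw0 T)

lemma blockMap_mul (S T : glIso (k := k) w) (i : ι) :
    blockMap hk hw0 (S * T) i = blockMap hk hw0 S (blockMap hk hw0 T i) :=
  blockMap_eq hk hw0 _ ((mapsBlockTo_blockMap hk hw0 T i).comp S.val.toLinearMap
    (blockMap_strictMono hk hw0 S) (mapsBlockTo_blockMap hk hw0 S))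

lemma blockMap_one (i : ι) : blockMap hk hw0 (1 : glIso (k := k) w) i = i :=
  blockMap_eq hk hw0 _ (mapsBlockTo_id i)

lemma blockMap_inv_blockMap (T : glIso (k := k) w) (i : ι) :
    blockMap hk hw0 T⁻¹ (blockMap hk hw0 T i) = i := by
  rw [← blockMap_mul, inv_mul_cancel, blockMap_one]

def blockPerm (T : glIso (k := k) w) : Equiv.Perm ι where
  toFun := blockMap hk hw0 T
  invFun := blockMap hk hw0 T⁻¹
  left_inv := blockMap_inv_blockMap hk hw0 T
  right_inv i := by simpa using blockMap_inv_blockMap hk hw0 T⁻¹ i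

lemma blockPerm_apply (T : glIso (k := k) w) (i : ι) : blockPerm hk hw0 T i = blockMap hk hw0 T i :=
  rfl

lemma blockPerm_mem_blockAut (T : glIso (k := k) w) : blockPerm hk hw0 T ∈ blockAut k := by
  have hmono (S : glIso (k := k) w) := (blockMap_strictMono hk hw0 S).monotone
  refine ⟨fun a b => ⟨fun h => hmono T h, fun h => ?_⟩, fun i => le_antisymm ?_ ?_⟩ <;>
    simp only [blockPerm_apply] at *
  · simpa only [blockMap_inv_blockMap] using hmono T⁻¹ h
  · simpa only [blockMap_inv_blockMap] using
      (mapsBlockTo_blockMap hk hw0 T⁻¹ (blockMap hk hw0 T i)).dim_le (T := T⁻¹.val.toLinearMap) hw0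
  · exact (mapsBlockTo_blockMap hk hw0 T i).dim_le (T := T.val.toLinearMap) hw0

-- The paper's `Λ : T ↦ η_T`.
def glIsoToBlockAut : glIso (k := k) w →* blockAut k where
  toFun T := ⟨blockPerm hk hw0 T, blockPerm_mem_blockAut hk hw0 T⟩
  map_one' := Subtype.ext (Equiv.ext (blockMap_one hk hw0))
  map_mul' S T := Subtype.ext (Equiv.ext (blockMap_mul hk hw0 S T))

lemma mem_ker_glIsoToBlockAut_iff (T : glIso (k := k) w) :
    T ∈ (glIsoToBlockAut hk hw0).ker ↔ InT w T.val.toLinearMap := by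
  rw [MonoidHom.mem_ker, inT_iff]
  refine ⟨fun h i => ?_, fun h => Subtype.ext (Equiv.ext fun i => blockMap_eq hk hw0 T (h i))⟩
  have hT := mapsBlockTo_blockMap hk hw0 T i
  rwa [show blockMap hk hw0 T i = i from congrArg (fun φ : blockAut k => φ.1 i) h] at hT

end Homomorphisms

section PermBlocks

variable [PartialOrder ι] [Field F] {k : ι → ℕ} {w : F → ℕ} (φ : blockAut k)
  {u : ∀ i, Fin (k i) → F} {i : ι}

def permBlocks : (∀ i, Fin (k i) → F) →ₗ[F] ∀ i, Fin (k i) → F where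
  toFun u i j := u (φ.1.symm i) (Fin.cast (blockAut.k_eq_k_symm φ i) j)
  map_add' _ _ := rfl
  map_smul' _ _ := rfl

lemma permBlocks_mul (ψ : blockAut k) :
    permBlocks (F := F) (φ * ψ) = (permBlocks φ).comp (permBlocks ψ) :=
  rfl

lemma permBlocks_one : permBlocks (F := F) (1 : blockAut k) = LinearMap.id :=
  rfl

def permBlocksEquiv : (∀ i, Fin (k i) → F) ≃ₗ[F] ∀ i, Fin (k i) → F :=
  LinearEquiv.ofLinearMap (permBlocks φ) (permBlocks φ⁻¹)
    (by rw [← permBlocks_mul, mul_inv_cancel, permBlocks_one])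
    (by rw [← permBlocks_mul, inv_mul_cancel, permBlocks_one])

lemma Wblk_permBlocks : Wblk w (permBlocks φ u) i = Wblk w u (φ.1.symm i) := by
  rw [Wblk, Wblk, ← map_univ_equiv (finCongr (blockAut.k_eq_k_symm φ i)), sup_map]
  rfl

variable [Fintype ι]

lemma mem_suppB_permBlocks : i ∈ suppB (permBlocks φ u) ↔ φ.1.symm i ∈ suppB u := by
  rw [mem_suppB, mem_suppB, not_iff_not]
  exact (finCongr (blockAut.k_eq_k_symm φ i)).surjective.injective_comp_right.eq_iff' rfl

lemma idealOf_permBlocks : idealOf (permBlocks φ u) = (idealOf u).map φ.1.toEmbedding := by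
  ext i
  rw [mem_map_equiv, mem_idealOf, mem_idealOf]
  constructor
  · rintro ⟨j, hj, hij⟩
    exact ⟨φ.1.symm j, (mem_suppB_permBlocks φ).1 hj, (blockAut.symm_le_symm_iff φ).2 hij⟩
  · rintro ⟨j, hj, hij⟩
    refine ⟨φ.1 j, (mem_suppB_permBlocks φ).2 (by simpa using hj), ?_⟩
    rwa [← blockAut.symm_le_symm_iff φ, Equiv.symm_apply_apply]

lemma maxOf_permBlocks : maxOf (permBlocks φ u) = (maxOf u).map φ.1.toEmbedding := by
  ext m
  rw [mem_map_equiv, mem_maxOf, mem_maxOf, idealOf_permBlocks, mem_map_equiv]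
  refine and_congr_right fun _ => ⟨fun h j hj hmj => ?_, fun h j hj hmj => ?_⟩
  · rw [h (φ.1 j) (by simpa [mem_map_equiv] using hj)
      (by rwa [← blockAut.symm_le_symm_iff φ, Equiv.symm_apply_apply]), Equiv.symm_apply_apply]
  · exact φ.1.symm.injective (h _ (mem_map_equiv.1 hj) ((blockAut.symm_le_symm_iff φ).2 hmj))

lemma omegaW_permBlocks [Fintype F] (u : ∀ i, Fin (k i) → F) :
    omegaW w (permBlocks φ u) = omegaW w u := by
  rw [omegaW, omegaW, idealOf_permBlocks, maxOf_permBlocks, ← Finset.map_sdiff, card_map, sum_map]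
  congr 1
  exact sum_congr rfl fun m _ => by simp [Wblk_permBlocks]

lemma mapsBlockTo_permBlocks (i : ι) : MapsBlockTo w (permBlocks φ) i (φ.1 i) := by
  refine fun x => ⟨fun l hl => ?_, by rw [Wblk_permBlocks, Equiv.symm_apply_apply]⟩
  have hl := mem_singleton.1 (suppB_single_subset i x ((mem_suppB_permBlocks φ).1 hl))
  exact mem_pIdeal.2 (by rw [← hl, Equiv.apply_symm_apply])

-- The paper's `Ψ : φ ↦ T_φ`.
variable (w) in
def blockAutToGlIso [Fintype F] : blockAut k →* glIso (k := k) w where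
  toFun φ := ⟨permBlocksEquiv φ, omegaW_permBlocks φ⟩
  map_one' := rfl
  map_mul' _ _ := rfl

end PermBlocks

section SemidirectProduct

variable [Fintype ι] [PartialOrder ι] [Field F] [Fintype F] {k : ι → ℕ} {w : F → ℕ}

lemma leftInverse_glIsoToBlockAut_blockAutToGlIso (hk : ∀ i, 0 < k i)
    (hw0 : ∀ a : F, w a = 0 ↔ a = 0) :
    Function.LeftInverse (glIsoToBlockAut hk hw0) (blockAutToGlIso w) := fun φ =>
  Subtype.ext (Equiv.ext fun i => blockMap_eq hk hw0 _ (mapsBlockTo_permBlocks φ i))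

lemma mem_range_blockAutToGlIso_iff (T : glIso (k := k) w) :
    T ∈ (blockAutToGlIso w).range ↔
      ∃ (φ : ι ≃ ι) (_ : ∀ a b : ι, a ≤ b ↔ φ a ≤ φ b) (hφk : ∀ i, k (φ i) = k i),
        ∀ (u : ∀ i, Fin (k i) → F) (i : ι) (j : Fin (k i)),
          T.val u i j = u (φ.symm i) (Fin.cast (by simpa using hφk (φ.symm i)) j) := by
  constructor
  · rintro ⟨φ, rfl⟩
    exact ⟨φ.1, φ.2.1, φ.2.2, fun u i j => rfl⟩
  · rintro ⟨φ, hφ, hφk, hT⟩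
    exact ⟨⟨φ, hφ, hφk⟩, Subtype.ext (LinearEquiv.ext fun u => funext fun i => funext fun j =>
      (hT u i j).symm)⟩

end SemidirectProduct

/-- The group of linear isometries is the (internal) semidirect product of the
normal subgroup `𝒯` and a subgroup `𝒜` isomorphic to `Aut(P,π)`
(the image of `Ψ : φ ↦ T_φ`). -/
theorem stmt14 [Fintype ι] [PartialOrder ι] [Field F] [Fintype F] {k : ι → ℕ}
    (hk : ∀ i, 0 < k i)
    (w : F → ℕ)
    (hw0 : ∀ a : F, w a = 0 ↔ a = 0) :
    ∃ Tsub Asub : Subgroup (glIso (k := k) w),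
      Tsub.Normal ∧ Tsub ⊓ Asub = ⊥ ∧ Tsub ⊔ Asub = ⊤ ∧
      (∀ T : glIso (k := k) w, T ∈ Tsub ↔ InT w T.val.toLinearMap) ∧
      (∀ T : glIso (k := k) w, T ∈ Asub ↔
        ∃ (φ : ι ≃ ι) (_ : ∀ a b : ι, a ≤ b ↔ φ a ≤ φ b)
          (hφk : ∀ i, k (φ i) = k i),
          ∀ (u : ∀ i, Fin (k i) → F) (i : ι) (j : Fin (k i)),
            T.val u i j = u (φ.symm i) (Fin.cast (by simpa using hφk (φ.symm i)) j)) := by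
  have hsplit := leftInverse_glIsoToBlockAut_blockAutToGlIso hk hw0
  exact ⟨(glIsoToBlockAut hk hw0).ker, (blockAutToGlIso w).range, inferInstance,
    MonoidHom.ker_inf_range_eq_bot_of_leftInverse hsplit,
    MonoidHom.ker_sup_range_eq_top_of_leftInverse hsplit,
    mem_ker_glIsoToBlockAut_iff hk hw0, mem_range_blockAutToGlIso_iff⟩
end
end

section
/- Let P be the chain 1 < 2 < ⋯ < s, r = t·M_w with 0 ≤ t ≤ s. A code C ⊆ V is r-perfect with respect to d_{w,(P,π)} if and only if there exists a function f : ⊕_{j=t+1}^s V_j → ⊕_{i=1}^t V_i such that C = {(f(v), v) : v ∈ ⊕_{j=t+1}^s V_j}. -/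
attribute [local instance] Classical.propDecidable

noncomputable section

variable {ι F : Type*}

section Aux
variable [Field F] [Fintype F] {s : ℕ} {k : Fin s → ℕ} {w : F → ℕ}

lemma key_iff (hw0 : ∀ a : F, w a = 0 ↔ a = 0) (t : ℕ)
    (u : ∀ i : Fin s, Fin (k i) → F) :
    omegaW w u ≤ t * Mw w ↔ ∀ i : Fin s, t ≤ (i : ℕ) → u i = 0 := by
  by_cases hu : u = 0
  · subst hu
    have h1 : idealOf (0 : ∀ i : Fin s, Fin (k i) → F) = ∅ := by
      ext i; simp [idealOf, suppB]
    have h2 : maxOf (0 : ∀ i : Fin s, Fin (k i) → F) = ∅ := by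
      rw [maxOf, h1]; simp
    simp [omegaW, h1, h2]
  · have hne : (suppB u).Nonempty := by
      obtain ⟨i0, hi0⟩ := Function.ne_iff.mp hu
      refine ⟨i0, ?_⟩
      simp only [suppB, Finset.mem_filter, Finset.mem_univ, true_and]
      simpa using hi0
    set m := (suppB u).max' hne with hmdef
    have hm : m ∈ suppB u := (suppB u).max'_mem hne
    have hmax : ∀ j ∈ suppB u, j ≤ m := fun j hj => (suppB u).le_max' j hj
    have hideal : idealOf u = Finset.Iic m := by
      ext i
      simp only [idealOf, Finset.mem_filter, Finset.mem_univ, true_and, Finset.mem_Iic]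
      constructor
      · rintro ⟨j, hj, hij⟩; exact hij.trans (hmax j hj)
      · intro h; exact ⟨m, hm, h⟩
    have hmaxOf : maxOf u = {m} := by
      ext i
      simp only [maxOf, hideal, Finset.mem_filter, Finset.mem_Iic, Finset.mem_singleton]
      constructor
      · rintro ⟨him, hmx⟩; exact hmx m le_rfl him
      · rintro rfl; exact ⟨le_rfl, fun j hj hmj => le_antisymm hmj hj⟩
    have homega : omegaW w u = Wblk w u m + (m : ℕ) * Mw w := by
      rw [omegaW, hmaxOf, hideal, Finset.sum_singleton]
      -- reduce card
      congr 1
      congr 1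
      rw [@Finset.card_sdiff_of_subset (Fin s) {m} (Finset.Iic m)
        (fun a b => Classical.propDecidable (a = b))
        (Finset.singleton_subset_iff.mpr (Finset.mem_Iic.mpr le_rfl)),
        Finset.card_singleton, Fin.card_Iic]
      omega
    have hum : u m ≠ 0 := by
      have := hm; simp only [suppB, Finset.mem_filter] at this; exact this.2
    obtain ⟨j0, hj0⟩ := Function.ne_iff.mp hum
    have hWpos : 1 ≤ Wblk w u m := by
      have h1 : 1 ≤ w (u m j0) := by
        rcases Nat.eq_zero_or_pos (w (u m j0)) with h | h
        · exact absurd ((hw0 _).mp h) hj0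
        · exact h
      exact h1.trans (Finset.le_sup (f := fun j => w (u m j)) (Finset.mem_univ j0))
    have hWle : Wblk w u m ≤ Mw w :=
      Finset.sup_le fun j _ => Finset.le_sup (f := w) (Finset.mem_univ (u m j))
    constructor
    · intro h i hti
      by_contra hui
      have him : i ≤ m := hmax i (by simp [suppB, hui])
      have htm : t ≤ (m : ℕ) := hti.trans him
      have h1 : t * Mw w ≤ (m : ℕ) * Mw w := Nat.mul_le_mul_right _ htm
      rw [homega] at h
      omega
    · intro h
      have hmt : (m : ℕ) < t := by
        by_contra hc
        exact hum (h m (le_of_not_gt hc))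
      rw [homega]
      calc Wblk w u m + (m : ℕ) * Mw w ≤ Mw w + (m : ℕ) * Mw w :=
            Nat.add_le_add_right hWle _
        _ = ((m : ℕ) + 1) * Mw w := by ring
        _ ≤ t * Mw w := Nat.mul_le_mul_right _ (by omega)

end Aux

/-- For a chain, `C` is `t·M_w`-perfect iff it is the graph of a function from
the last `s - t` blocks to the first `t` blocks. -/
theorem stmt17 [Field F] [Fintype F]
    (s t : ℕ) (ht : t ≤ s) (k : Fin s → ℕ) (hk : ∀ i, 0 < k i)
    (w : F → ℕ)
    (hw0 : ∀ a : F, w a = 0 ↔ a = 0)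
    (hwneg : ∀ a : F, w (-a) = w a)
    (hwadd : ∀ a b : F, w (a + b) ≤ w a + w b)
    (C : Set (∀ i : Fin s, Fin (k i) → F)) :
    (∀ v : ∀ i : Fin s, Fin (k i) → F,
        ∃! c, c ∈ C ∧ omegaW w (v - c) ≤ t * Mw w) ↔
      ∃ f : (∀ i : Fin s, Fin (k i) → F) → (∀ i : Fin s, Fin (k i) → F),
        (∀ v (i : Fin s), t ≤ (i : ℕ) → f v i = 0) ∧
        (∀ v v', (∀ i : Fin s, t ≤ (i : ℕ) → v i = v' i) → f v = f v') ∧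
        C = {x | ∃ v : ∀ i : Fin s, Fin (k i) → F,
          (∀ i : Fin s, (i : ℕ) < t → v i = 0) ∧ x = f v + v} := by
  have hkey : ∀ v c : ∀ i : Fin s, Fin (k i) → F,
      (omegaW w (v - c) ≤ t * Mw w) ↔ ∀ i : Fin s, t ≤ (i : ℕ) → v i = c i := by
    intro v c
    rw [key_iff hw0 t (v - c)]
    constructor <;> intro h i hi
    · have := h i hi
      rw [Pi.sub_apply, sub_eq_zero] at this; exact this
    · rw [Pi.sub_apply, sub_eq_zero]; exact h i hi
  -- high part function
  set H : (∀ i : Fin s, Fin (k i) → F) → (∀ i : Fin s, Fin (k i) → F) :=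
    fun v i => if t ≤ (i : ℕ) then v i else 0 with hHdef
  have hHhigh : ∀ v (i : Fin s), t ≤ (i : ℕ) → H v i = v i := by
    intro v i hi; simp [hHdef, hi]
  have hHlow : ∀ v (i : Fin s), (i : ℕ) < t → H v i = 0 := by
    intro v i hi; simp [hHdef, Nat.not_le.mpr hi]
  have hHidem : ∀ v, H (H v) = H v := by
    intro v
    funext i
    by_cases hi : t ≤ (i : ℕ)
    · rw [hHhigh (H v) i hi]
    · rw [hHlow (H v) i (Nat.not_le.mp hi), hHlow v i (Nat.not_le.mp hi)]
  constructor
  · intro h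
    choose g hg using fun v => (h v).exists
    have hguniq : ∀ v c, c ∈ C → omegaW w (v - c) ≤ t * Mw w → c = g v := by
      intro v c hc hcond
      exact (h v).unique ⟨hc, hcond⟩ (hg v)
    refine ⟨fun v i => if (i : ℕ) < t then g (H v) i else 0, ?_, ?_, ?_⟩
    · intro v i hi
      exact if_neg (Nat.not_lt.mpr hi)
    · intro v v' hvv'
      have hH : H v = H v' := by
        funext i j
        by_cases hi : t ≤ (i : ℕ)
        · rw [hHhigh v i hi, hHhigh v' i hi, hvv' i hi]
        · rw [hHlow v i (Nat.not_le.mp hi), hHlow v' i (Nat.not_le.mp hi)]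
      dsimp only
      rw [hH]
    · ext c
      simp only [Set.mem_setOf_eq]
      constructor
      · intro hc
        have hceq : c = g (H c) := by
          apply hguniq (H c) c hc
          rw [hkey]
          intro i hi
          exact hHhigh c i hi
        refine ⟨H c, fun i hi => hHlow c i hi, ?_⟩
        funext i j
        show c i j = (if (i : ℕ) < t then g (H (H c)) i else 0) j + H c i j
        rw [hHidem c]
        by_cases hi : (i : ℕ) < t
        · rw [if_pos hi, hHlow c i hi, ← hceq]
          simp
        · rw [if_neg hi, hHhigh c i (Nat.not_lt.mp hi)]
          simp
      · rintro ⟨v, hvlow, rfl⟩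
        have hHv : H v = v := by
          funext i j
          by_cases hi : t ≤ (i : ℕ)
          · rw [hHhigh v i hi]
          · rw [hHlow v i (Nat.not_le.mp hi), hvlow i (Nat.not_le.mp hi)]
        have hgc : ∀ i : Fin s, t ≤ (i : ℕ) → v i = g v i := (hkey v (g v)).mp (hg v).2
        have heq : ((fun (i : Fin s) => if (i : ℕ) < t then g (H v) i else 0) + v) = g v := by
          funext i j
          show (if (i : ℕ) < t then g (H v) i else 0) j + v i j = g v i j
          by_cases hi : (i : ℕ) < t
          · rw [if_pos hi, hvlow i hi, hHv]
            simp
          · rw [if_neg hi]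
            have := congrFun (hgc i (Nat.not_lt.mp hi)) j
            simpa using this
        show ((fun (i : Fin s) => if (i : ℕ) < t then g (H v) i else 0) + v) ∈ C
        rw [heq]
        exact (hg v).1
  · rintro ⟨f, hfhigh, hfdep, hC⟩ v
    refine ⟨f (H v) + H v, ⟨?_, ?_⟩, ?_⟩
    · rw [hC]
      exact ⟨H v, fun i hi => hHlow v i hi, rfl⟩
    · rw [hkey]
      intro i hi
      rw [Pi.add_apply, hfhigh (H v) i hi, hHhigh v i hi, zero_add]
    · rintro c' ⟨hc', hcond'⟩
      rw [hkey] at hcond'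
      rw [hC] at hc'
      obtain ⟨u, hulow, rfl⟩ := hc'
      have huH : u = H v := by
        funext i j
        by_cases hi : t ≤ (i : ℕ)
        · have h2 : v i j = f u i j + u i j := congrFun (hcond' i hi) j
          rw [hfhigh u i hi] at h2
          simp only [Pi.zero_apply, zero_add] at h2
          rw [hHhigh v i hi]
          exact h2.symm
        · rw [hulow i (Nat.not_le.mp hi), hHlow v i (Nat.not_le.mp hi)]
      rw [huH]
end
end
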